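/- arXiv:2404.18488 — 4 statements merged into one kernel-verified Lean document; each statement's English description precedes it below -/
import Mathlib

section
/- Let N ≥ 1, c > 1, and z ∈ ℝ^N. Then (1 − 2/c)·(max_i z_i − min_i z_i) ≤ Y_c(z) ≤ max_i z_i − min_i z_i. -/
open Real Finset

/-- Diameter: max minus min of a finite family of reals. -/
noncomputable def diam {N : ℕ} (v : Fin N → ℝ) : ℝ := (⨆ i, v i) - (⨅ i, v i)

/-- `S_c = Σ_{n=0}^{N-1} c^n`. -/
noncomputable def Sc (N : ℕ) (c : ℝ) : ℝ := ∑ n ∈ Finset.range N, c ^ n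

/-- `Y_c(z)`: difference of the two convex-type combinations of the nondecreasing
rearrangement of `z` (weights `c^{i-1}` and `c^{N-i}`), divided by `S_c`. -/
noncomputable def Yc {N : ℕ} (c : ℝ) (z : Fin N → ℝ) : ℝ :=
  (∑ i : Fin N, c ^ (i : ℕ) * z (Tuple.sort z i) -
   ∑ i : Fin N, c ^ (N - 1 - (i : ℕ)) * z (Tuple.sort z i)) / Sc N c

/-!
Let `w` be the nondecreasing rearrangement of `z`, so that `diam z = w (N-1) - w 0 =: D`.
Reversing the second sum gives `S_c · Y_c(z) = Σ_i c^i (w i - w (N-1-i))`, and every difference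
lies in `[-D, D]`. Bounding all of them by `D` gives the upper bound. For the lower bound, the top
term equals `c^(N-1) D` and the others are at least `-c^i D`, so `S_c Y_c ≥ (2 c^(N-1) - S_c) D`;
finally `(1 - 2/c) S_c ≤ 2 c^(N-1) - S_c` amounts to `(c - 1) S_c = c^N - 1 ≤ c^N`.
-/

theorem Monotone.ciSup_eq_apply_top {ι α : Type*} [Preorder ι] [OrderTop ι]
    [ConditionallyCompleteLattice α] {f : ι → α} (hf : Monotone f) : ⨆ i, f i = f ⊤ :=
  le_antisymm (ciSup_le fun _ ↦ hf le_top)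
    (le_ciSup ⟨f ⊤, by rintro _ ⟨i, rfl⟩; exact hf le_top⟩ ⊤)

theorem Monotone.ciInf_eq_apply_bot {ι α : Type*} [Preorder ι] [OrderBot ι]
    [ConditionallyCompleteLattice α] {f : ι → α} (hf : Monotone f) : ⨅ i, f i = f ⊥ :=
  le_antisymm (ciInf_le ⟨f ⊥, by rintro _ ⟨i, rfl⟩; exact hf bot_le⟩ ⊥)
    (le_ciInf fun _ ↦ hf bot_le)

theorem diam_comp_perm {N : ℕ} (z : Fin N → ℝ) (σ : Equiv.Perm (Fin N)) :
    diam (z ∘ σ) = diam z := by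
  simp only [diam, Function.comp_apply, σ.iSup_comp, σ.iInf_comp]

theorem Monotone.diam_eq {n : ℕ} {w : Fin (n + 1) → ℝ} (hw : Monotone w) :
    diam w = w (Fin.last n) - w 0 := by
  rw [diam, hw.ciSup_eq_apply_top, hw.ciInf_eq_apply_bot, Fin.top_eq_last, bot_eq_zero]

theorem Monotone.sub_le_last_sub_zero {n : ℕ} {w : Fin (n + 1) → ℝ} (hw : Monotone w)
    (i j : Fin (n + 1)) : w i - w j ≤ w (Fin.last n) - w 0 := by
  linarith [hw (Fin.le_last i), hw (Fin.zero_le j)]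

theorem sum_mul_sub_rev_le {n : ℕ} {w : Fin (n + 1) → ℝ} (hw : Monotone w)
    {a : Fin (n + 1) → ℝ} (ha : ∀ i, 0 ≤ a i) :
    ∑ i, a i * (w i - w i.rev) ≤ (∑ i, a i) * (w (Fin.last n) - w 0) := by
  rw [sum_mul]
  exact sum_le_sum fun i _ ↦ mul_le_mul_of_nonneg_left (hw.sub_le_last_sub_zero _ _) (ha i)

theorem le_sum_mul_sub_rev {n : ℕ} {w : Fin (n + 1) → ℝ} (hw : Monotone w)
    {a : Fin (n + 1) → ℝ} (ha : ∀ i, 0 ≤ a i) :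
    (2 * a (Fin.last n) - ∑ i, a i) * (w (Fin.last n) - w 0) ≤ ∑ i, a i * (w i - w i.rev) := by
  set D := w (Fin.last n) - w 0
  have hrest : ∑ i ∈ univ.erase (Fin.last n), a i * -D
      ≤ ∑ i ∈ univ.erase (Fin.last n), a i * (w i - w i.rev) :=
    sum_le_sum fun i _ ↦
      mul_le_mul_of_nonneg_left (by linarith [hw.sub_le_last_sub_zero i.rev i]) (ha i)
  rw [← sum_mul] at hrest
  rw [← add_sum_erase univ _ (mem_univ (Fin.last n)),
    ← add_sum_erase univ (fun i ↦ a i * (w i - w i.rev)) (mem_univ (Fin.last n)), Fin.rev_last]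
  linarith

theorem sum_pow_sub_mul_eq_sum_pow_mul_rev {R : Type*} [Semiring R] {N : ℕ} (c : R)
    (w : Fin N → R) :
    ∑ i : Fin N, c ^ (N - 1 - (i : ℕ)) * w i = ∑ i : Fin N, c ^ (i : ℕ) * w i.rev :=
  Fintype.sum_equiv Fin.revPerm _ _ fun i ↦ by
    rw [Fin.revPerm_apply, Fin.rev_rev, Fin.val_rev]
    congr 2
    omega

theorem Yc_eq_sum_sub_rev {N : ℕ} (c : ℝ) (z : Fin N → ℝ) :
    Yc c z = (∑ i : Fin N, c ^ (i : ℕ) *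
      ((z ∘ Tuple.sort z) i - (z ∘ Tuple.sort z) i.rev)) / Sc N c := by
  simp only [Yc, mul_sub, sum_sub_distrib]
  congr 2
  exact sum_pow_sub_mul_eq_sum_pow_mul_rev c (z ∘ Tuple.sort z)

theorem Sc_pos {c : ℝ} (hc : 0 < c) (n : ℕ) : 0 < Sc (n + 1) c :=
  sum_pos (fun i _ ↦ pow_pos hc i) nonempty_range_add_one

theorem one_sub_two_div_mul_Sc_le {c : ℝ} (hc : 0 < c) (n : ℕ) :
    (1 - 2 / c) * Sc (n + 1) c ≤ 2 * c ^ n - Sc (n + 1) c := by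
  have hgeom : Sc (n + 1) c * (c - 1) = c ^ (n + 1) - 1 := geom_sum_mul c (n + 1)
  have key : 2 * Sc (n + 1) c - 2 * c ^ n ≤ 2 * Sc (n + 1) c / c := by
    rw [le_div_iff₀ hc]
    nlinarith [pow_succ c n]
  linarith [show (1 - 2 / c) * Sc (n + 1) c = Sc (n + 1) c - 2 * Sc (n + 1) c / c by ring]

/-- for `N ≥ 1`, `c > 1` and `z ∈ ℝ^N`,
`(1 - 2/c)·(max z - min z) ≤ Y_c(z) ≤ max z - min z`. -/
theorem stmt1 {N : ℕ} (hN : 1 ≤ N) (c : ℝ) (hc : 1 < c) (z : Fin N → ℝ) :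
    (1 - 2 / c) * diam z ≤ Yc c z ∧ Yc c z ≤ diam z := by
  obtain ⟨n, rfl⟩ : ∃ n, N = n + 1 := ⟨N - 1, by omega⟩
  have hc0 : 0 < c := zero_lt_one.trans hc
  set w := z ∘ Tuple.sort z
  have hw : Monotone w := Tuple.monotone_sort z
  have hdiam : diam z = w (Fin.last n) - w 0 := by
    rw [← diam_comp_perm z (Tuple.sort z), hw.diam_eq]
  have hSc : ∑ i : Fin (n + 1), c ^ (i : ℕ) = Sc (n + 1) c :=
    Fin.sum_univ_eq_sum_range (c ^ ·) _
  have hpow : ∀ i : Fin (n + 1), 0 ≤ c ^ (i : ℕ) := fun i ↦ by positivity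
  rw [Yc_eq_sum_sub_rev, hdiam]
  constructor
  · rw [le_div_iff₀ (Sc_pos hc0 n)]
    calc (1 - 2 / c) * (w (Fin.last n) - w 0) * Sc (n + 1) c
        = ((1 - 2 / c) * Sc (n + 1) c) * (w (Fin.last n) - w 0) := by ring
      _ ≤ (2 * c ^ n - Sc (n + 1) c) * (w (Fin.last n) - w 0) :=
        mul_le_mul_of_nonneg_right (one_sub_two_div_mul_Sc_le hc0 n)
          (sub_nonneg.2 (hw (Fin.zero_le _)))
      _ ≤ _ := by simpa only [hSc, Fin.val_last] using le_sum_mul_sub_rev hw hpow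
  · rw [div_le_iff₀ (Sc_pos hc0 n), mul_comm, ← hSc]
    exact sum_mul_sub_rev_le hw hpow
end

section
/- Suppose m·a_i(0) + ω_i(0) = Ω_i + (K/N)·Σ_{j=1}^N ψ_{ij}·sin(θ_j(0) − θ_i(0) + α) for every i = 1,…,N, where m, K > 0, 0 < α < π/2, and 0 ≤ ψ_{ij} ≤ ψ_u for all i, j. Then D_a(0) ≤ (1/m)·D_ω(0) + (1/m)·D(Ω) + (2Kψ_u·cos α/m)·D_θ(0) + 2Kψ_u·sin α/m. -/
open Real Finset

/-!
Subtracting the equations for `i` and `j` gives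
`m (a_i - a_j) = (Ω_i - Ω_j) - (ω_i - ω_j) + (coupling_i - coupling_j)`.
Each coupling term is a mean of `N` summands `ψ_{ij} sin (θ_j - θ_i + α)`, and expanding
`sin (x + α) = sin x cos α + cos x sin α` with `|sin x| ≤ |x| ≤ D_θ` and `|cos x| ≤ 1` bounds
every summand by `ψ_u (cos α · D_θ + sin α)`.
-/

lemma abs_sub_le_diam {N : ℕ} (v : Fin N → ℝ) (i j : Fin N) : |v i - v j| ≤ diam v := by
  have hsup := (Set.finite_range v).bddAbove
  have hinf := (Set.finite_range v).bddBelow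
  exact abs_sub_le_iff.mpr ⟨sub_le_sub (le_ciSup hsup i) (ciInf_le hinf j),
    sub_le_sub (le_ciSup hsup j) (ciInf_le hinf i)⟩

lemma abs_sin_add_le {x α : ℝ} (hcos : 0 ≤ cos α) (hsin : 0 ≤ sin α) :
    |sin (x + α)| ≤ |x| * cos α + sin α :=
  calc |sin (x + α)| = |sin x * cos α + cos x * sin α| := by rw [sin_add]
    _ ≤ |sin x| * cos α + |cos x| * sin α := by
      simpa only [abs_mul, abs_of_nonneg hcos, abs_of_nonneg hsin]
        using abs_add_le (sin x * cos α) (cos x * sin α)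
    _ ≤ |x| * cos α + 1 * sin α :=
      add_le_add (mul_le_mul_of_nonneg_right abs_sin_le_abs hcos)
        (mul_le_mul_of_nonneg_right (abs_cos_le_one x) hsin)
    _ = |x| * cos α + sin α := by rw [one_mul]

noncomputable def coupling {N : ℕ} (K α : ℝ) (ψ : Fin N → Fin N → ℝ) (θ : Fin N → ℝ)
    (i : Fin N) : ℝ :=
  (K / N) * ∑ j, ψ i j * sin (θ j - θ i + α)

lemma abs_coupling_le {N : ℕ} [NeZero N] {K α ψu : ℝ} (hK : 0 ≤ K)
    (hcos : 0 ≤ cos α) (hsin : 0 ≤ sin α) {ψ : Fin N → Fin N → ℝ}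
    (hψ : ∀ i j, 0 ≤ ψ i j ∧ ψ i j ≤ ψu) (θ : Fin N → ℝ) (i : Fin N) :
    |coupling K α ψ θ i| ≤ K * ψu * (cos α * diam θ + sin α) := by
  have hN : (0 : ℝ) < N := by exact_mod_cast Nat.pos_of_neZero N
  have hterm : ∀ j, |ψ i j * sin (θ j - θ i + α)| ≤ ψu * (cos α * diam θ + sin α) := by
    intro j
    rw [abs_mul, abs_of_nonneg (hψ i j).1]
    have hsin_le : |sin (θ j - θ i + α)| ≤ cos α * diam θ + sin α :=
      (abs_sin_add_le hcos hsin).trans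
        (by linarith [mul_le_mul_of_nonneg_right (abs_sub_le_diam θ j i) hcos])
    exact mul_le_mul (hψ i j).2 hsin_le (abs_nonneg _) ((hψ i j).1.trans (hψ i j).2)
  calc |coupling K α ψ θ i|
      = K / N * |∑ j, ψ i j * sin (θ j - θ i + α)| := by
        rw [coupling, abs_mul, abs_of_nonneg (by positivity)]
    _ ≤ K / N * (N * (ψu * (cos α * diam θ + sin α))) := by
        gcongr
        simpa using (abs_sum_le_sum_abs _ univ).trans (sum_le_sum fun j _ => hterm j)
    _ = K * ψu * (cos α * diam θ + sin α) := by field_simp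

lemma abs_sub_le_of_mul_add_eq {ι : Type*} {m C : ℝ} (hm : 0 < m) {a ω Ω F : ι → ℝ}
    (heq : ∀ i, m * a i + ω i = Ω i + F i) (hF : ∀ i, |F i| ≤ C) (i j : ι) :
    |a i - a j| ≤ (|ω i - ω j| + |Ω i - Ω j| + 2 * C) / m := by
  rw [le_div_iff₀ hm, ← abs_of_pos hm, ← abs_mul]
  have hdiff : (a i - a j) * m = (Ω i - Ω j) - (ω i - ω j) + (F i - F j) := by
    linarith [heq i, heq j]
  rw [hdiff]
  have hFij : |F i - F j| ≤ 2 * C := (abs_sub _ _).trans (by linarith [hF i, hF j])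
  calc |(Ω i - Ω j) - (ω i - ω j) + (F i - F j)|
      ≤ |Ω i - Ω j| + |ω i - ω j| + |F i - F j| :=
        (abs_add_le _ _).trans (by gcongr; exact abs_sub _ _)
    _ ≤ |ω i - ω j| + |Ω i - Ω j| + 2 * C := by linarith

/-- the initial acceleration-diameter estimate. -/
theorem stmt3 {N : ℕ} (hN : 1 ≤ N) (m K α ψu : ℝ) (hm : 0 < m) (hK : 0 < K)
    (hα0 : 0 < α) (hα : α < π / 2)
    (θ0 ω0 a0 Ω : Fin N → ℝ) (ψ : Fin N → Fin N → ℝ)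
    (hψ : ∀ i j, 0 ≤ ψ i j ∧ ψ i j ≤ ψu)
    (heq : ∀ i, m * a0 i + ω0 i =
      Ω i + (K / N) * ∑ j : Fin N, ψ i j * Real.sin (θ0 j - θ0 i + α)) :
    (⨆ i, ⨆ j, |a0 i - a0 j|) ≤
      (1 / m) * diam ω0 + (1 / m) * diam Ω
        + (2 * K * ψu * Real.cos α / m) * diam θ0 + 2 * K * ψu * Real.sin α / m := by
  have : NeZero N := ⟨Nat.one_le_iff_ne_zero.mp hN⟩
  have hcos : 0 ≤ cos α := cos_nonneg_of_neg_pi_div_two_le_of_le (by linarith [pi_pos]) hα.le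
  have hsin : 0 ≤ sin α := sin_nonneg_of_nonneg_of_le_pi hα0.le (by linarith [pi_pos])
  refine ciSup_le fun i => ciSup_le fun j => ?_
  calc |a0 i - a0 j|
      ≤ (|ω0 i - ω0 j| + |Ω i - Ω j| + 2 * (K * ψu * (cos α * diam θ0 + sin α))) / m :=
        abs_sub_le_of_mul_add_eq hm heq (abs_coupling_le hK.le hcos hsin hψ θ0) i j
    _ ≤ (diam ω0 + diam Ω + 2 * (K * ψu * (cos α * diam θ0 + sin α))) / m := by
        gcongr <;> exact abs_sub_le_diam _ i j
    _ = _ := by ring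
end

section
/- Let θ_1 ≤ θ_2 ≤ … ≤ θ_N be real numbers with θ_N − θ_1 < π, on a symmetric connected network. Then Σ_{i=2}^N Σ_{j=1,…,i−1 with ψ_{ij}>0} sin(θ_j − θ_i) ≤ −sin(θ_N − θ_1), and Σ_{i=1}^{N−1} Σ_{j=i+1,…,N with ψ_{ij}>0} sin(θ_j − θ_i) ≥ sin(θ_N − θ_1). -/
open Real Finset

/-- The interaction graph: `i` and `j` adjacent iff `i ≠ j` and the (symmetric) weight
`ψ i j` is positive. -/
def netGraph {N : ℕ} (ψ : Fin N → Fin N → ℝ) : SimpleGraph (Fin N) where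
  Adj i j := i ≠ j ∧ 0 < ψ i j ∧ 0 < ψ j i
  symm := ⟨fun _ _ h => ⟨h.1.symm, h.2.2, h.2.1⟩⟩
  loopless := ⟨fun _ h => h.1 rfl⟩

theorem Real.mul_sin_div_le_sin {t D : ℝ} (ht : 0 ≤ t) (htD : t ≤ D) (hD : D ≤ π) :
    t * (sin D / D) ≤ sin t := by
  rcases (ht.trans htD).eq_or_lt with rfl | hD0
  · obtain rfl := le_antisymm htD ht
    simp
  have h := strictConcaveOn_sin_Icc.concaveOn.2 (x := 0) (y := D)
    ⟨le_rfl, pi_pos.le⟩ ⟨hD0.le, hD⟩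
    (sub_nonneg.2 ((div_le_one hD0).2 htD)) (div_nonneg ht hD0.le) (sub_add_cancel 1 (t / D))
  simp only [smul_eq_mul, mul_zero, sin_zero, zero_add, div_mul_cancel₀ t hD0.ne'] at h
  linarith [mul_div_assoc' t (sin D) D, div_mul_eq_mul_div t D (sin D)]

theorem Real.sin_le_sum_sin {ι : Type*} {s : Finset ι} {t : ι → ℝ} {D : ℝ}
    (ht : ∀ i ∈ s, 0 ≤ t i ∧ t i ≤ D) (hD : D ≤ π) (hD0 : 0 ≤ D)
    (hsum : D ≤ ∑ i ∈ s, t i) :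
    sin D ≤ ∑ i ∈ s, sin (t i) := by
  have hslope : 0 ≤ sin D / D := div_nonneg (sin_nonneg_of_nonneg_of_le_pi hD0 hD) hD0
  calc sin D = D * (sin D / D) := by
        rcases hD0.eq_or_lt with rfl | hD0
        · simp
        · field_simp
    _ ≤ (∑ i ∈ s, t i) * (sin D / D) := mul_le_mul_of_nonneg_right hsum hslope
    _ = ∑ i ∈ s, t i * (sin D / D) := sum_mul _ _ _
    _ ≤ ∑ i ∈ s, sin (t i) :=
        sum_le_sum fun i hi => mul_sin_div_le_sin (ht i hi).1 (ht i hi).2 hD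

theorem sub_le_sum_of_Ioc_subset_biUnion {ι : Type*} {s : Finset ι} {a b : ι → ℝ} {x y : ℝ}
    (hab : ∀ i ∈ s, a i ≤ b i) (hcover : Set.Ioc x y ⊆ ⋃ i ∈ s, Set.Ioc (a i) (b i)) :
    y - x ≤ ∑ i ∈ s, (b i - a i) := by
  have h := (MeasureTheory.measure_mono (μ := MeasureTheory.volume) hcover).trans
    (MeasureTheory.measure_biUnion_finset_le s _)
  simp only [volume_Ioc] at h
  rwa [← ENNReal.ofReal_sum_of_nonneg fun i hi => sub_nonneg.2 (hab i hi),
    ENNReal.ofReal_le_ofReal_iff (sum_nonneg fun i hi => sub_nonneg.2 (hab i hi))] at h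

theorem SimpleGraph.Connected.exists_adj_mem_not_mem {V : Type*} {G : SimpleGraph V}
    (hG : G.Connected) {S : Set V} {u v : V} (hu : u ∈ S) (hv : v ∉ S) :
    ∃ x y, G.Adj x y ∧ x ∈ S ∧ y ∉ S := by
  obtain ⟨w⟩ := hG.preconnected u v
  obtain ⟨d, -, hd, hd'⟩ := w.exists_boundary_dart S hu hv
  exact ⟨d.fst, d.snd, d.adj, hd, hd'⟩

theorem Finset.sum_below_eq_neg_sum_above_of_antisymm {α : Type*} [Fintype α] [LinearOrder α]
    {ψ : α → α → ℝ} (hψ : ∀ i j, ψ i j = ψ j i) {f : α → α → ℝ}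
    (hf : ∀ i j, f j i = -f i j) :
    ∑ i, ∑ j ∈ univ.filter (fun j => j < i ∧ 0 < ψ i j), f i j =
      -∑ i, ∑ j ∈ univ.filter (fun j => i < j ∧ 0 < ψ i j), f i j := by
  simp only [sum_filter, ← sum_neg_distrib]
  rw [sum_comm]
  refine sum_congr rfl fun i _ => sum_congr rfl fun j _ => ?_
  rw [hψ, hf]
  split_ifs <;> simp

section upperEdges

variable {N : ℕ} (ψ : Fin N → Fin N → ℝ)

noncomputable def upperEdges : Finset (Fin N × Fin N) :=
  univ.filter fun p => p.1 < p.2 ∧ 0 < ψ p.1 p.2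

theorem sum_upperEdges (f : Fin N → Fin N → ℝ) :
    ∑ p ∈ upperEdges ψ, f p.1 p.2 =
      ∑ i, ∑ j ∈ univ.filter (fun j => i < j ∧ 0 < ψ i j), f i j := by
  rw [upperEdges, sum_filter, ← univ_product_univ, sum_product]
  simp only [sum_filter]

variable {ψ}

theorem sub_le_sum_upperEdges (hconn : (netGraph ψ).Connected) {θ : Fin N → ℝ}
    (hθ : Monotone θ) (a b : Fin N) :
    θ b - θ a ≤ ∑ p ∈ upperEdges ψ, (θ p.2 - θ p.1) := by
  refine sub_le_sum_of_Ioc_subset_biUnion (fun p hp => hθ (mem_filter.1 hp).2.1.le) ?_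
  rintro x ⟨hax, hxb⟩
  obtain ⟨u, v, huv, hu, hv⟩ := hconn.exists_adj_mem_not_mem (S := {v | θ v < x})
    (u := a) (v := b) hax hxb.not_gt
  replace hv : x ≤ θ v := not_lt.1 hv
  exact Set.mem_iUnion₂.2 ⟨(u, v), mem_filter.2 ⟨mem_univ _, hθ.reflect_lt (hu.trans_le hv),
    huv.2.1⟩, hu, hv⟩

end upperEdges

/-- key dissipation estimate for ordered phases on a connected network. -/
theorem stmt4 {N : ℕ} (hN : 2 ≤ N) (θ : Fin N → ℝ) (hmono : Monotone θ)
    (ψ : Fin N → Fin N → ℝ) (hψsym : ∀ i j, ψ i j = ψ j i)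
    (hconn : (netGraph ψ).Connected)
    (hdiam : θ ⟨N - 1, by omega⟩ - θ ⟨0, by omega⟩ < π) :
    (∑ i : Fin N, ∑ j ∈ Finset.univ.filter (fun j => j < i ∧ 0 < ψ i j),
        Real.sin (θ j - θ i))
      ≤ - Real.sin (θ ⟨N - 1, by omega⟩ - θ ⟨0, by omega⟩) ∧
    Real.sin (θ ⟨N - 1, by omega⟩ - θ ⟨0, by omega⟩) ≤
      ∑ i : Fin N, ∑ j ∈ Finset.univ.filter (fun j => i < j ∧ 0 < ψ i j),
        Real.sin (θ j - θ i) := by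
  set first : Fin N := ⟨0, by omega⟩
  set last : Fin N := ⟨N - 1, by omega⟩
  have hbounds : ∀ i, θ first ≤ θ i ∧ θ i ≤ θ last := fun i =>
    ⟨hmono (Fin.le_def.2 (Nat.zero_le _)), hmono (Fin.le_def.2 (Nat.le_sub_one_of_lt i.isLt))⟩
  have upper : sin (θ last - θ first) ≤
      ∑ i, ∑ j ∈ univ.filter (fun j => i < j ∧ 0 < ψ i j), sin (θ j - θ i) := by
    rw [← sum_upperEdges ψ (fun i j => sin (θ j - θ i))]
    refine sin_le_sum_sin (fun p hp => ⟨sub_nonneg.2 (hmono (mem_filter.1 hp).2.1.le), ?_⟩)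
      hdiam.le (sub_nonneg.2 (hbounds first).2) (sub_le_sum_upperEdges hconn hmono first last)
    linarith [(hbounds p.1).1, (hbounds p.2).2]
  refine ⟨?_, upper⟩
  rw [sum_below_eq_neg_sum_above_of_antisymm hψsym fun i j => by rw [← sin_neg, neg_sub]]
  exact neg_le_neg upper
end

section
/- Let ω_1 ≤ ω_2 ≤ … ≤ ω_N and θ_1, …, θ_N be real numbers with max_{i,j} |θ_j − θ_i| ≤ D^∞, where 0 < α < δ, D^∞ + δ < π/2, and c·cos(D^∞ + δ) > 2. Let (ψ_{ij}) be a symmetric N × N matrix with ψ_{ij} ≥ 0. Then Σ_{i=1}^N c^{i−1}·Σ_{j=1}^N ψ_{ij}·cos(θ_j − θ_i + α)·(ω_j − ω_i) ≤ Σ_{i=2}^N Σ_{j=1}^{i−1} ψ_{ij}·(ω_j − ω_i). -/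
open Real Finset

/-!
Pair the terms `(i, j)` and `(j, i)` of the double sum, with `j < i`. Since `ψ` is symmetric
and `ω i - ω j ≥ 0`, the pair equals `-ψ i j (ω i - ω j)` times
`c^i cos(θ j - θ i + α) - c^j cos(θ i - θ j + α)`. Both cosine arguments lie in `[-(D^∞ + δ), D^∞ + δ]`,
so the first cosine is at least `cos (D^∞ + δ)` and the second at most `1`; as `c cos (D^∞ + δ) > 2`
and `i ≥ j + 1`, that weight difference is at least `c^j ≥ 1`, which bounds the pair by the
corresponding term `ψ i j (ω j - ω i)` on the right.
-/

theorem Finset.sum_sum_eq_sum_sum_lt_add_swap {ι M : Type*} [Fintype ι] [LinearOrder ι]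
    [AddCommMonoid M] (F : ι → ι → M) (hF : ∀ i, F i i = 0) :
    ∑ i, ∑ j, F i j = ∑ i, ∑ j with j < i, (F i j + F j i) := by
  have hsplit : ∀ i, ∑ j, F i j = ∑ j with j < i, F i j + ∑ j with i < j, F i j := by
    intro i
    rw [sum_filter, sum_filter, ← sum_add_distrib]
    refine sum_congr rfl fun j _ => ?_
    rcases lt_trichotomy j i with h | rfl | h
    · simp [h, h.not_gt]
    · simp [hF]
    · simp [h, h.not_gt]
  have hswap : ∑ i, ∑ j with i < j, F i j = ∑ i, ∑ j with j < i, F j i :=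
    sum_comm' (by simp)
  simp only [hsplit, sum_add_distrib, hswap]

theorem Real.cos_le_cos_of_abs_le {x y : ℝ} (hxy : |x| ≤ y) (hy : y ≤ π) : cos y ≤ cos x := by
  rw [← cos_abs x]
  exact cos_le_cos_of_nonneg_of_le_pi (abs_nonneg x) hy hxy

theorem one_le_pow_mul_sub_pow_mul {c k x y : ℝ} {i j : ℕ} (hc : 1 ≤ c) (hk : 0 ≤ k)
    (hck : 2 ≤ c * k) (hkx : k ≤ x) (hy : y ≤ 1) (hji : j < i) :
    1 ≤ c ^ i * x - c ^ j * y := by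
  have hcj : 1 ≤ c ^ j := one_le_pow₀ hc
  have hx : 2 * c ^ j ≤ c ^ i * x :=
    calc 2 * c ^ j ≤ c ^ j * (c * k) := by nlinarith
      _ = c ^ (j + 1) * k := by ring
      _ ≤ c ^ i * k := mul_le_mul_of_nonneg_right (pow_le_pow_right₀ hc hji) hk
      _ ≤ c ^ i * x := mul_le_mul_of_nonneg_left hkx (by positivity)
  nlinarith

theorem pow_mul_add_pow_mul_le {c k p x y a b : ℝ} {i j : ℕ} (hc : 1 ≤ c) (hk : 0 ≤ k)
    (hck : 2 ≤ c * k) (hkx : k ≤ x) (hy : y ≤ 1) (hji : j < i) (hp : 0 ≤ p) (hab : a ≤ b) :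
    c ^ i * (p * x * (a - b)) + c ^ j * (p * y * (b - a)) ≤ p * (a - b) := by
  have hK := one_le_pow_mul_sub_pow_mul hc hk hck hkx hy hji
  nlinarith [mul_nonneg (mul_nonneg hp (sub_nonneg.2 hab)) (sub_nonneg.2 hK)]

theorem stmt15_general {N : ℕ} (c α δ Dinf : ℝ)
    (hc : 0 < c) (hα : 0 < α)
    (hαδ : α < δ) (hDδ : Dinf + δ < π / 2) (hcc : 2 < c * Real.cos (Dinf + δ))
    (ω θ : Fin N → ℝ) (hmono : Monotone ω)
    (hθ : ∀ i j, |θ j - θ i| ≤ Dinf)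
    (ψ : Fin N → Fin N → ℝ) (hψsym : ∀ i j, ψ i j = ψ j i) (hψnn : ∀ i j, 0 ≤ ψ i j) :
    ∑ i : Fin N, c ^ (i : ℕ) *
        ∑ j : Fin N, ψ i j * Real.cos (θ j - θ i + α) * (ω j - ω i)
      ≤ ∑ i : Fin N, ∑ j ∈ Finset.univ.filter (fun j => j < i), ψ i j * (ω j - ω i) := by
  have hk : 0 < cos (Dinf + δ) := pos_of_mul_pos_right (hcc.trans' two_pos) hc.le
  have hc1 : 1 ≤ c := by linarith [mul_le_of_le_one_right hc.le (cos_le_one (Dinf + δ))]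
  have hcos : ∀ i j, cos (Dinf + δ) ≤ cos (θ j - θ i + α) := fun i j =>
    cos_le_cos_of_abs_le ((abs_add_le _ _).trans (add_le_add (hθ i j) (by
      rw [abs_of_pos hα]; exact hαδ.le))) (by linarith [pi_pos])
  calc ∑ i : Fin N, c ^ (i : ℕ) * ∑ j, ψ i j * cos (θ j - θ i + α) * (ω j - ω i)
      = ∑ i : Fin N, ∑ j, c ^ (i : ℕ) * (ψ i j * cos (θ j - θ i + α) * (ω j - ω i)) := by
        simp only [mul_sum]
    _ = ∑ i : Fin N, ∑ j with j < i, (c ^ (i : ℕ) * (ψ i j * cos (θ j - θ i + α) * (ω j - ω i)) +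
          c ^ (j : ℕ) * (ψ j i * cos (θ i - θ j + α) * (ω i - ω j))) :=
        sum_sum_eq_sum_sum_lt_add_swap _ (by simp)
    _ ≤ ∑ i, ∑ j with j < i, ψ i j * (ω j - ω i) := by
        refine sum_le_sum fun i _ => sum_le_sum fun j hj => ?_
        rw [hψsym j i]
        exact pow_mul_add_pow_mul_le hc1 hk.le hcc.le (hcos i j) (cos_le_one _)
          (mem_filter.1 hj).2 (hψnn i j) (hmono (mem_filter.1 hj).2.le)

/-- frequency-weighted rearrangement estimate under a small phase diameter. -/
theorem stmt15 {N : ℕ} (hN : 2 ≤ N) (c α δ Dinf : ℝ)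
    (hc : 0 < c) (hα : 0 < α) (hδ0 : 0 < δ) (hD : 0 < Dinf)
    (hαδ : α < δ) (hDδ : Dinf + δ < π / 2) (hcc : 2 < c * Real.cos (Dinf + δ))
    (ω θ : Fin N → ℝ) (hmono : Monotone ω)
    (hθ : ∀ i j, |θ j - θ i| ≤ Dinf)
    (ψ : Fin N → Fin N → ℝ) (hψsym : ∀ i j, ψ i j = ψ j i) (hψnn : ∀ i j, 0 ≤ ψ i j) :
    ∑ i : Fin N, c ^ (i : ℕ) *
        ∑ j : Fin N, ψ i j * Real.cos (θ j - θ i + α) * (ω j - ω i)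
      ≤ ∑ i : Fin N, ∑ j ∈ Finset.univ.filter (fun j => j < i), ψ i j * (ω j - ω i) :=
  stmt15_general c α δ Dinf hc hα hαδ hDδ hcc ω θ hmono hθ ψ hψsym hψnn
end
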